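/- Let F(w,V) = (1/n)·Σ_{i=1}^n ℓ(wᵀ(x_i + V f(x_i)); y_i) with ℓ(·;y) twice differentiable and convex, and F_lin(u) = (1/n)·Σ_{i=1}^n ℓ(uᵀx_i; y_i). Then for every V ∈ ℝ^{d×k} and every u ∈ ℝ^d with u ≠ 0: ‖∇F(0,V)‖ + ‖V‖·√( |λ_min(∇²F(0,V))|·‖∂²F/∂w²(0,V)‖ + λ_min(∇²F(0,V))² ) ≥ (F(0,V) − F_lin(u)) / ‖u‖, where ∇F(0,V) and ∇²F(0,V) are the gradient and Hessian with respect to (w, vec(V)) evaluated at w = 0, ∂²F/∂w²(0,V) is the d×d block of the Hessian corresponding to w, λ_min denotes minimal eigenvalue, ‖V‖ and ‖∂²F/∂w²(0,V)‖ are spectral norms, and ‖∇F(0,V)‖ is the Euclidean norm. -/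

import Mathlib

open scoped RealInnerProductSpace
open Finset

noncomputable section

/-- Euclidean column vectors in `ℝ^d`. -/
abbrev Vec (d : ℕ) : Type := EuclideanSpace ℝ (Fin d)

/-- The concatenated parameter vector `(w, vec(V))`. -/
abbrev Param (d k : ℕ) : Type := EuclideanSpace ℝ (Fin d ⊕ Fin d × Fin k)

/-- Pack `(w, V)` into a single Euclidean vector. -/
def pairWV {d k : ℕ} (w : Vec d) (V : Matrix (Fin d) (Fin k) ℝ) : Param d k :=
  (EuclideanSpace.equiv (Fin d ⊕ Fin d × Fin k) ℝ).symm
    (Sum.elim (fun i => w i) (fun p => V p.1 p.2))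

/-- The residual-network objective `F(w,V) = (1/n)·Σᵢ ℓ(wᵀ(xᵢ + V f(xᵢ)); yᵢ)`. -/
def netObj {d k n : ℕ} (ℓ : ℝ → ℝ → ℝ) (f : Vec d → Vec k)
    (x : Fin n → Vec d) (y : Fin n → ℝ) (z : Param d k) : ℝ :=
  (1 / (n : ℝ)) *
    ∑ i, ℓ (∑ j, z (Sum.inl j) * ((x i) j + ∑ l, z (Sum.inr (j, l)) * (f (x i)) l)) (y i)

/-- The linear-predictor objective `F_lin(u) = (1/n)·Σᵢ ℓ(uᵀxᵢ; yᵢ)`. -/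
def linObj {d n : ℕ} (ℓ : ℝ → ℝ → ℝ) (x : Fin n → Vec d) (y : Fin n → ℝ) (u : Vec d) : ℝ :=
  (1 / (n : ℝ)) * ∑ i, ℓ (∑ j, u j * (x i) j) (y i)

/-- Spectral norm of a matrix. -/
def matSpectralNorm {a c : ℕ} (V : Matrix (Fin a) (Fin c) ℝ) : ℝ :=
  ‖LinearMap.toContinuousLinearMap (Matrix.toEuclideanLin V)‖

/-- Minimal eigenvalue via the Rayleigh quotient `λ_min(M) = min_{‖z‖=1} zᵀ M z`. -/
def lambdaMin {ι : Type} [Fintype ι] [DecidableEq ι] (M : Matrix ι ι ℝ) : ℝ :=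
  ⨅ z : {z : EuclideanSpace ℝ ι // ‖z‖ = 1}, ⟪z.1, Matrix.toEuclideanLin M z.1⟫

/-- The Hessian matrix of second partial derivatives of `F`. -/
def hessianMatrix {ι : Type} [Fintype ι] [DecidableEq ι] (F : EuclideanSpace ℝ ι → ℝ)
    (z : EuclideanSpace ℝ ι) : Matrix ι ι ℝ :=
  Matrix.of fun p q =>
    fderiv ℝ (fun v => fderiv ℝ F v (EuclideanSpace.single q 1)) z (EuclideanSpace.single p 1)

/-- The `d × d` block of the Hessian corresponding to `w`. -/
def hessWW {d k n : ℕ} (ℓ : ℝ → ℝ → ℝ) (f : Vec d → Vec k)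
    (x : Fin n → Vec d) (y : Fin n → ℝ) (z : Param d k) : Matrix (Fin d) (Fin d) ℝ :=
  Matrix.of fun i j => hessianMatrix (netObj ℓ f x y) z (Sum.inl i) (Sum.inl j)

/-!
At `w = 0` the prediction `wᵀ(x + V f(x))` vanishes, and along a line `s ↦ (0, V) + s • (w, M)`
it is the quadratic `wᵀ(x + V f(x)) s + wᵀ M f(x) s²`. Differentiating `ℓ` twice along these
parabolas at `s = 0` shows that the `V`-block of the Hessian at `(0, V)` vanishes and that its mixed
block is `(w, M) ↦ 2 wᵀ M m` with `m = (1/n) Σᵢ ℓ'(0; yᵢ) f(xᵢ)`. The Rayleigh quotient at the test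
direction `(w, -t w mᵀ)`, for a unit vector `w`, gives
`λ_min (1 + t² ‖m‖²) ≤ wᵀ (∂²F/∂w²) w - 2 t ‖m‖²` for all `t`, hence
`‖m‖² ≤ |λ_min| ‖∂²F/∂w²‖ + λ_min²`. On the other hand, convexity of `ℓ` at `0` gives
`F(0, V) - F_lin(u) ≤ -(1/n) Σᵢ ℓ'(0; yᵢ) uᵀxᵢ = -∂_w F(0, V) · u + uᵀ V m`, and Cauchy–Schwarz
bounds both terms.
-/

lemma ConvexOn.deriv_mul_sub_le_sub {S : Set ℝ} {φ : ℝ → ℝ} (hφ : ConvexOn ℝ S φ) {a b : ℝ}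
    (ha : a ∈ S) (hb : b ∈ S) (hφa : DifferentiableAt ℝ φ a) :
    deriv φ a * (b - a) ≤ φ b - φ a := by
  rcases lt_trichotomy b a with hba | rfl | hab
  · have := hφ.slope_le_deriv hb ha hba hφa
    rw [slope_def_field, div_le_iff₀ (by linarith)] at this
    nlinarith
  · simp
  · have := hφ.deriv_le_slope ha hb hab hφa
    rwa [slope_def_field, le_div_iff₀ (by linarith)] at this

lemma hasDerivAt_comp_quadratic {φ : ℝ → ℝ} (hφ : Differentiable ℝ φ) (a c s : ℝ) :
    HasDerivAt (fun s => φ (a * s + c * s ^ 2))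
      (deriv φ (a * s + c * s ^ 2) * (a + 2 * c * s)) s := by
  have h := ((hasDerivAt_id' s).const_mul a).fun_add ((hasDerivAt_pow 2 s).const_mul c)
  exact (hφ _).hasDerivAt.comp s (h.congr_deriv (by ring))

lemma hasDerivAt_deriv_comp_quadratic_zero {φ : ℝ → ℝ} (hφ' : Differentiable ℝ (deriv φ))
    (a c : ℝ) :
    HasDerivAt (fun s => deriv φ (a * s + c * s ^ 2) * (a + 2 * c * s))
      (deriv (deriv φ) 0 * a ^ 2 + 2 * c * deriv φ 0) 0 := by
  have h := ((hasDerivAt_id' (0 : ℝ)).const_mul (2 * c)).const_add a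
  exact ((hasDerivAt_comp_quadratic hφ' a c 0).fun_mul h).congr_deriv (by simp; ring)

lemma hasDerivAt_deriv_line {E : Type*} [NormedAddCommGroup E] [NormedSpace ℝ E] {F : E → ℝ}
    {z₀ : E} (hF : Differentiable ℝ F) (hF' : DifferentiableAt ℝ (fderiv ℝ F) z₀) (z : E) :
    HasDerivAt (deriv fun s : ℝ => F (z₀ + s • z)) (fderiv ℝ (fderiv ℝ F) z₀ z z) 0 := by
  have hline : ∀ s : ℝ, HasDerivAt (fun s : ℝ => z₀ + s • z) z s := fun s => by
    simpa using ((hasDerivAt_id s).smul_const z).const_add z₀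
  have hderiv : (deriv fun s : ℝ => F (z₀ + s • z)) = fun s => fderiv ℝ F (z₀ + s • z) z :=
    funext fun s => ((hF _).hasFDerivAt.comp_hasDerivAt s (hline s)).deriv
  rw [hderiv]
  simpa [Function.comp_def] using
    (hF'.hasFDerivAt.clm_apply (hasFDerivAt_const z z₀)).comp_hasDerivAt_of_eq 0 (hline 0)
      (by simp)

lemma le_abs_mul_add_sq_of_forall_mul_le {lam Q K s : ℝ} (hs : 0 ≤ s) (hQK : Q ≤ K)
    (h : ∀ t : ℝ, lam * (1 + t ^ 2 * s) ≤ Q - 2 * t * s) : s ≤ |lam| * K + lam ^ 2 := by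
  have hlamK : lam ≤ K := by simpa using (h 0).trans (by simpa using hQK)
  rcases lt_or_ge lam 0 with hlam | hlam
  · -- `t = -1/λ` is the optimal choice
    have hne := hlam.ne
    have ht := mul_le_mul_of_nonpos_left (h (-lam⁻¹)) hlam.le
    have e1 : lam * (lam * (1 + (-lam⁻¹) ^ 2 * s)) = lam ^ 2 + s := by field_simp
    have e2 : lam * (Q - 2 * (-lam⁻¹) * s) = lam * Q + 2 * s := by field_simp; ring
    rw [e1, e2] at ht
    rw [abs_of_neg hlam]
    nlinarith
  · rcases hs.eq_or_lt with rfl | hs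
    · rw [abs_of_nonneg hlam]
      nlinarith
    · have ht := h ((K + 1) / (2 * s))
      have e : 2 * ((K + 1) / (2 * s)) * s = K + 1 := by field_simp
      nlinarith [mul_nonneg hlam (by positivity : (0 : ℝ) ≤ 1 + ((K + 1) / (2 * s)) ^ 2 * s)]

lemma neg_fderiv_le_norm_gradient_mul {E : Type*} [NormedAddCommGroup E] [InnerProductSpace ℝ E]
    [CompleteSpace E] (F : E → ℝ) (z v : E) :
    -fderiv ℝ F z v ≤ ‖gradient F z‖ * ‖v‖ := by
  rw [← toDual_gradient, InnerProductSpace.toDual_apply_apply]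
  exact (neg_le_abs _).trans (abs_real_inner_le_norm _ _)

lemma inner_toEuclideanLin_le_matSpectralNorm {a c : ℕ} (V : Matrix (Fin a) (Fin c) ℝ) (u : Vec a)
    (v : Vec c) :
    ⟪u, Matrix.toEuclideanLin V v⟫ ≤ matSpectralNorm V * ‖v‖ * ‖u‖ :=
  calc ⟪u, Matrix.toEuclideanLin V v⟫ ≤ ‖u‖ * ‖Matrix.toEuclideanLin V v‖ := real_inner_le_norm _ _
    _ ≤ ‖u‖ * (matSpectralNorm V * ‖v‖) := by
        gcongr
        exact (LinearMap.toContinuousLinearMap (Matrix.toEuclideanLin V)).le_opNorm v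
    _ = matSpectralNorm V * ‖v‖ * ‖u‖ := by ring

section Hessian

variable {ι : Type} [Fintype ι] [DecidableEq ι]

lemma hessianMatrix_apply {F : EuclideanSpace ℝ ι → ℝ} {z₀ : EuclideanSpace ℝ ι}
    (hF : DifferentiableAt ℝ (fderiv ℝ F) z₀) (p q : ι) :
    hessianMatrix F z₀ p q =
      fderiv ℝ (fderiv ℝ F) z₀ (EuclideanSpace.single p 1) (EuclideanSpace.single q 1) := by
  simp [hessianMatrix, fderiv_clm_apply hF (differentiableAt_const _)]

lemma inner_toEuclideanLin_hessianMatrix {F : EuclideanSpace ℝ ι → ℝ} {z₀ : EuclideanSpace ℝ ι}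
    (hF : DifferentiableAt ℝ (fderiv ℝ F) z₀) (z : EuclideanSpace ℝ ι) :
    ⟪z, Matrix.toEuclideanLin (hessianMatrix F z₀) z⟫ = fderiv ℝ (fderiv ℝ F) z₀ z z := by
  have hz : ∑ p, z p • EuclideanSpace.single p (1 : ℝ) = z := by
    simpa using (EuclideanSpace.basisFun ι ℝ).sum_repr z
  conv_rhs => rw [← hz]
  simp only [Matrix.toLpLin_apply, PiLp.inner_apply, Matrix.mulVec, dotProduct,
    hessianMatrix_apply hF, RCLike.inner_apply, conj_trivial, map_sum, map_smul,
    _root_.sum_apply, smul_apply, smul_eq_mul, Finset.mul_sum]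
  rw [Finset.sum_comm]
  refine Finset.sum_congr rfl fun p _ => ?_
  rw [Finset.sum_mul]
  exact Finset.sum_congr rfl fun q _ => by ring

lemma abs_inner_toEuclideanLin_le (M : Matrix ι ι ℝ) (z : EuclideanSpace ℝ ι) :
    |⟪z, Matrix.toEuclideanLin M z⟫| ≤
      ‖LinearMap.toContinuousLinearMap (Matrix.toEuclideanLin M)‖ * ‖z‖ ^ 2 :=
  calc |⟪z, Matrix.toEuclideanLin M z⟫| ≤ ‖z‖ * ‖Matrix.toEuclideanLin M z‖ :=
        abs_real_inner_le_norm _ _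
    _ ≤ ‖z‖ * (‖LinearMap.toContinuousLinearMap (Matrix.toEuclideanLin M)‖ * ‖z‖) :=
        mul_le_mul_of_nonneg_left
          ((LinearMap.toContinuousLinearMap (Matrix.toEuclideanLin M)).le_opNorm z) (norm_nonneg z)
    _ = _ := by ring

lemma lambdaMin_mul_norm_sq_le (M : Matrix ι ι ℝ) (z : EuclideanSpace ℝ ι) :
    lambdaMin M * ‖z‖ ^ 2 ≤ ⟪z, Matrix.toEuclideanLin M z⟫ := by
  rcases eq_or_ne z 0 with rfl | hz
  · simp
  have hbdd : BddBelow (Set.range fun v : {v : EuclideanSpace ℝ ι // ‖v‖ = 1} =>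
      ⟪v.1, Matrix.toEuclideanLin M v.1⟫) := by
    refine ⟨-‖LinearMap.toContinuousLinearMap (Matrix.toEuclideanLin M)‖, ?_⟩
    rintro _ ⟨v, rfl⟩
    have := abs_inner_toEuclideanLin_le M v.1
    rw [v.2, one_pow, mul_one] at this
    exact neg_le_of_abs_le this
  have hnorm : 0 < ‖z‖ := norm_pos_iff.mpr hz
  have hunit : ‖‖z‖⁻¹ • z‖ = 1 := by
    rw [norm_smul, norm_inv, norm_norm, inv_mul_cancel₀ hnorm.ne']
  have hle := ciInf_le hbdd ⟨‖z‖⁻¹ • z, hunit⟩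
  rw [map_smul, real_inner_smul_left, real_inner_smul_right, ← mul_assoc] at hle
  calc lambdaMin M * ‖z‖ ^ 2 ≤ ‖z‖⁻¹ * ‖z‖⁻¹ * ⟪z, Matrix.toEuclideanLin M z⟫ * ‖z‖ ^ 2 :=
        mul_le_mul_of_nonneg_right hle (by positivity)
    _ = ⟪z, Matrix.toEuclideanLin M z⟫ := by field_simp

end Hessian

section Network

variable {d k n : ℕ}

@[simp] lemma pairWV_inl (w : Vec d) (V : Matrix (Fin d) (Fin k) ℝ) (j : Fin d) :
    pairWV w V (Sum.inl j) = w j := rfl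

@[simp] lemma pairWV_inr (w : Vec d) (V : Matrix (Fin d) (Fin k) ℝ) (p : Fin d × Fin k) :
    pairWV w V (Sum.inr p) = V p.1 p.2 := rfl

lemma norm_pairWV_sq (w : Vec d) (M : Matrix (Fin d) (Fin k) ℝ) :
    ‖pairWV w M‖ ^ 2 = ‖w‖ ^ 2 + ∑ j, ∑ l, M j l ^ 2 := by
  simp [EuclideanSpace.real_norm_sq_eq, Fintype.sum_sum_type, Fintype.sum_prod_type]

lemma norm_pairWV_zero_right (w : Vec d) : ‖pairWV w (0 : Matrix (Fin d) (Fin k) ℝ)‖ = ‖w‖ := by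
  simpa using norm_pairWV_sq w (0 : Matrix (Fin d) (Fin k) ℝ)

lemma norm_pairWV_outer_sq (w : Vec d) (m : Vec k) (t : ℝ) :
    ‖pairWV w (Matrix.of fun j l => t * w j * m l)‖ ^ 2 = ‖w‖ ^ 2 * (1 + t ^ 2 * ‖m‖ ^ 2) := by
  rw [norm_pairWV_sq, EuclideanSpace.real_norm_sq_eq w, EuclideanSpace.real_norm_sq_eq m, mul_add,
    mul_one, Finset.sum_mul]
  congr 1
  refine Finset.sum_congr rfl fun j _ => ?_
  simp only [Matrix.of_apply, Finset.mul_sum]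
  exact Finset.sum_congr rfl fun l _ => by ring

lemma inner_toEuclideanLin_outer (w : Vec d) (m v : Vec k) (t : ℝ) :
    ⟪w, Matrix.toEuclideanLin (Matrix.of fun j l => t * w j * m l) v⟫ = t * ‖w‖ ^ 2 * ⟪m, v⟫ := by
  simp only [EuclideanSpace.real_norm_sq_eq, PiLp.inner_apply, Matrix.toLpLin_apply,
    Matrix.mulVec, dotProduct, RCLike.inner_apply, conj_trivial, Matrix.of_apply, Finset.mul_sum,
    Finset.sum_mul]
  rw [Finset.sum_comm]
  exact Finset.sum_congr rfl fun l _ => Finset.sum_congr rfl fun j _ => by ring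

lemma inner_pairWV_zero_toEuclideanLin
    (A : Matrix (Fin d ⊕ Fin d × Fin k) (Fin d ⊕ Fin d × Fin k) ℝ) (w : Vec d) :
    ⟪pairWV w 0, Matrix.toEuclideanLin A (pairWV w 0)⟫ =
      ⟪w, Matrix.toEuclideanLin (A.submatrix Sum.inl Sum.inl) w⟫ := by
  simp [PiLp.inner_apply, Matrix.toLpLin_apply, Matrix.mulVec, dotProduct, Fintype.sum_sum_type]

def residualPredictor (c : Vec d) (b : Vec k) (z : Param d k) : ℝ :=
  ∑ j, z (Sum.inl j) * (c j + ∑ l, z (Sum.inr (j, l)) * b l)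

lemma contDiff_residualPredictor (c : Vec d) (b : Vec k) :
    ContDiff ℝ 2 (residualPredictor c b) := by
  unfold residualPredictor
  fun_prop

lemma residualPredictor_line (c : Vec d) (b : Vec k) (V M : Matrix (Fin d) (Fin k) ℝ)
    (w : Vec d) (s : ℝ) :
    residualPredictor c b (pairWV 0 V + s • pairWV w M) =
      ⟪w, c + Matrix.toEuclideanLin V b⟫ * s + ⟪w, Matrix.toEuclideanLin M b⟫ * s ^ 2 := by
  simp only [residualPredictor, PiLp.add_apply, PiLp.smul_apply, pairWV_inl, pairWV_inr,
    PiLp.zero_apply, smul_eq_mul, zero_add, add_mul, Finset.sum_add_distrib, mul_add,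
    Finset.mul_sum, Matrix.toLpLin_apply, PiLp.inner_apply, Matrix.mulVec, dotProduct,
    RCLike.inner_apply, conj_trivial, Finset.sum_mul]
  rw [add_assoc]
  congr 1
  · exact Finset.sum_congr rfl fun j _ => by ring
  · congr 1 <;> exact Finset.sum_congr rfl fun j _ => Finset.sum_congr rfl fun l _ => by ring

variable {ℓ : ℝ → ℝ → ℝ} {f : Vec d → Vec k} {x : Fin n → Vec d} {y : Fin n → ℝ}

lemma netObj_eq (z : Param d k) :
    netObj ℓ f x y z = 1 / n * ∑ i, ℓ (residualPredictor (x i) (f (x i)) z) (y i) := rfl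

lemma hasFDerivAt_netObj (hdiff : ∀ y₀ : ℝ, Differentiable ℝ fun p => ℓ p y₀) (v : Param d k) :
    HasFDerivAt (netObj ℓ f x y)
      ((1 / n : ℝ) • ∑ i, deriv (fun p => ℓ p (y i)) (residualPredictor (x i) (f (x i)) v) •
        fderiv ℝ (residualPredictor (x i) (f (x i))) v) v := by
  refine HasFDerivAt.const_mul (HasFDerivAt.fun_sum fun i _ => ?_) _
  exact (hdiff _ _).hasDerivAt.comp_hasFDerivAt v
    ((contDiff_residualPredictor _ _).differentiable (by norm_num) v).hasFDerivAt

lemma differentiable_netObj (hdiff : ∀ y₀ : ℝ, Differentiable ℝ fun p => ℓ p y₀) :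
    Differentiable ℝ (netObj ℓ f x y) :=
  fun v => (hasFDerivAt_netObj hdiff v).differentiableAt

lemma differentiable_fderiv_netObj (hdiff : ∀ y₀ : ℝ, Differentiable ℝ fun p => ℓ p y₀)
    (hdiff2 : ∀ y₀ : ℝ, Differentiable ℝ (deriv fun p => ℓ p y₀)) :
    Differentiable ℝ (fderiv ℝ (netObj ℓ f x y)) := by
  rw [show fderiv ℝ (netObj ℓ f x y) = _ from funext fun v => (hasFDerivAt_netObj hdiff v).fderiv]
  have hP := fun i => contDiff_residualPredictor (x i) (f (x i))
  have h1 : ∀ i, Differentiable ℝ fun v =>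
      deriv (fun p => ℓ p (y i)) (residualPredictor (x i) (f (x i)) v) :=
    fun i => (hdiff2 _).comp ((hP i).differentiable (by norm_num))
  have h2 : ∀ i, Differentiable ℝ (fderiv ℝ (residualPredictor (x i) (f (x i)))) :=
    fun i => ((hP i).fderiv_right (m := 1) (by norm_num)).differentiable (by norm_num)
  fun_prop

lemma netObj_line (V M : Matrix (Fin d) (Fin k) ℝ) (w : Vec d) (s : ℝ) :
    netObj ℓ f x y (pairWV 0 V + s • pairWV w M) =
      1 / n * ∑ i, ℓ (⟪w, x i + Matrix.toEuclideanLin V (f (x i))⟫ * s +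
        ⟪w, Matrix.toEuclideanLin M (f (x i))⟫ * s ^ 2) (y i) := by
  simp only [netObj_eq, residualPredictor_line]

lemma hasDerivAt_netObj_line (hdiff : ∀ y₀ : ℝ, Differentiable ℝ fun p => ℓ p y₀)
    (V M : Matrix (Fin d) (Fin k) ℝ) (w : Vec d) (s : ℝ) :
    HasDerivAt (fun s : ℝ => netObj ℓ f x y (pairWV 0 V + s • pairWV w M))
      (1 / n * ∑ i, deriv (fun p => ℓ p (y i))
          (⟪w, x i + Matrix.toEuclideanLin V (f (x i))⟫ * s +
            ⟪w, Matrix.toEuclideanLin M (f (x i))⟫ * s ^ 2) *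
        (⟪w, x i + Matrix.toEuclideanLin V (f (x i))⟫ +
          2 * ⟪w, Matrix.toEuclideanLin M (f (x i))⟫ * s)) s := by
  simp only [netObj_line]
  exact HasDerivAt.const_mul _
    (HasDerivAt.fun_sum fun i _ => hasDerivAt_comp_quadratic (hdiff _) _ _ s)

lemma fderiv_netObj_pairWV_zero (hdiff : ∀ y₀ : ℝ, Differentiable ℝ fun p => ℓ p y₀)
    (V M : Matrix (Fin d) (Fin k) ℝ) (w : Vec d) :
    fderiv ℝ (netObj ℓ f x y) (pairWV 0 V) (pairWV w M) =
      1 / n * ∑ i, deriv (fun p => ℓ p (y i)) 0 * ⟪w, x i + Matrix.toEuclideanLin V (f (x i))⟫ := by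
  rw [← (differentiable_netObj hdiff _).lineDeriv_eq_fderiv, lineDeriv,
    (hasDerivAt_netObj_line hdiff V M w 0).deriv]
  simp

lemma inner_hessianMatrix_netObj_pairWV (hdiff : ∀ y₀ : ℝ, Differentiable ℝ fun p => ℓ p y₀)
    (hdiff2 : ∀ y₀ : ℝ, Differentiable ℝ (deriv fun p => ℓ p y₀))
    (V M : Matrix (Fin d) (Fin k) ℝ) (w : Vec d) :
    ⟪pairWV w M, Matrix.toEuclideanLin (hessianMatrix (netObj ℓ f x y) (pairWV 0 V)) (pairWV w M)⟫ =
      1 / n * ∑ i, (deriv (deriv fun p => ℓ p (y i)) 0 *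
          ⟪w, x i + Matrix.toEuclideanLin V (f (x i))⟫ ^ 2 +
        2 * ⟪w, Matrix.toEuclideanLin M (f (x i))⟫ * deriv (fun p => ℓ p (y i)) 0) := by
  rw [inner_toEuclideanLin_hessianMatrix (differentiable_fderiv_netObj hdiff hdiff2 _),
    ← (hasDerivAt_deriv_line (differentiable_netObj hdiff)
      (differentiable_fderiv_netObj hdiff hdiff2 _) _).deriv,
    show (deriv fun s : ℝ => netObj ℓ f x y (pairWV 0 V + s • pairWV w M)) = _ from
      funext fun s => (hasDerivAt_netObj_line hdiff V M w s).deriv]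
  exact (HasDerivAt.const_mul _ (HasDerivAt.fun_sum fun i _ =>
    hasDerivAt_deriv_comp_quadratic_zero (hdiff2 _) _ _)).deriv

def mixedPartialVec (ℓ : ℝ → ℝ → ℝ) (f : Vec d → Vec k) (x : Fin n → Vec d) (y : Fin n → ℝ) :
    Vec k :=
  (1 / n : ℝ) • ∑ i, deriv (fun p => ℓ p (y i)) 0 • f (x i)

lemma inner_toEuclideanLin_mixedPartialVec (A : Matrix (Fin d) (Fin k) ℝ) (w : Vec d) :
    ⟪w, Matrix.toEuclideanLin A (mixedPartialVec ℓ f x y)⟫ =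
      1 / n * ∑ i, deriv (fun p => ℓ p (y i)) 0 * ⟪w, Matrix.toEuclideanLin A (f (x i))⟫ := by
  simp [mixedPartialVec, inner_sum, inner_smul_right]

lemma inner_hessianMatrix_netObj_pairWV_eq (hdiff : ∀ y₀ : ℝ, Differentiable ℝ fun p => ℓ p y₀)
    (hdiff2 : ∀ y₀ : ℝ, Differentiable ℝ (deriv fun p => ℓ p y₀))
    (V M : Matrix (Fin d) (Fin k) ℝ) (w : Vec d) :
    ⟪pairWV w M, Matrix.toEuclideanLin (hessianMatrix (netObj ℓ f x y) (pairWV 0 V)) (pairWV w M)⟫ =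
      ⟪w, Matrix.toEuclideanLin (hessWW ℓ f x y (pairWV 0 V)) w⟫ +
        2 * ⟪w, Matrix.toEuclideanLin M (mixedPartialVec ℓ f x y)⟫ := by
  rw [show hessWW ℓ f x y (pairWV 0 V) =
      (hessianMatrix (netObj ℓ f x y) (pairWV 0 V)).submatrix Sum.inl Sum.inl from rfl,
    ← inner_pairWV_zero_toEuclideanLin, inner_hessianMatrix_netObj_pairWV hdiff hdiff2,
    inner_hessianMatrix_netObj_pairWV hdiff hdiff2, inner_toEuclideanLin_mixedPartialVec]
  simp only [map_zero, LinearMap.zero_apply, inner_zero_right, mul_zero, zero_mul, add_zero,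
    Finset.sum_add_distrib, mul_add, Finset.mul_sum, add_right_inj]
  exact Finset.sum_congr rfl fun i _ => by ring

lemma norm_mixedPartialVec_sq_le (hdiff : ∀ y₀ : ℝ, Differentiable ℝ fun p => ℓ p y₀)
    (hdiff2 : ∀ y₀ : ℝ, Differentiable ℝ (deriv fun p => ℓ p y₀))
    (V : Matrix (Fin d) (Fin k) ℝ) {w : Vec d} (hw : ‖w‖ = 1) :
    ‖mixedPartialVec ℓ f x y‖ ^ 2 ≤
      |lambdaMin (hessianMatrix (netObj ℓ f x y) (pairWV 0 V))| *
          matSpectralNorm (hessWW ℓ f x y (pairWV 0 V)) +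
        lambdaMin (hessianMatrix (netObj ℓ f x y) (pairWV 0 V)) ^ 2 := by
  have hQK : ⟪w, Matrix.toEuclideanLin (hessWW ℓ f x y (pairWV 0 V)) w⟫ ≤
      matSpectralNorm (hessWW ℓ f x y (pairWV 0 V)) := by
    simpa [hw, matSpectralNorm] using (le_abs_self _).trans (abs_inner_toEuclideanLin_le _ w)
  refine le_abs_mul_add_sq_of_forall_mul_le (sq_nonneg _) hQK fun t => ?_
  have := lambdaMin_mul_norm_sq_le (hessianMatrix (netObj ℓ f x y) (pairWV 0 V))
    (pairWV w (Matrix.of fun j l => -t * w j * mixedPartialVec ℓ f x y l))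
  rw [norm_pairWV_outer_sq, inner_hessianMatrix_netObj_pairWV_eq hdiff hdiff2,
    inner_toEuclideanLin_outer, real_inner_self_eq_norm_sq, hw] at this
  linarith

lemma linObj_eq (u : Vec d) : linObj ℓ x y u = 1 / n * ∑ i, ℓ ⟪u, x i⟫ (y i) := by
  simp [linObj, PiLp.inner_apply, mul_comm]

lemma netObj_pairWV_zero_sub_linObj_le (hconv : ∀ y₀ : ℝ, ConvexOn ℝ Set.univ fun p => ℓ p y₀)
    (hdiff : ∀ y₀ : ℝ, Differentiable ℝ fun p => ℓ p y₀) (V : Matrix (Fin d) (Fin k) ℝ)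
    (u : Vec d) :
    netObj ℓ f x y (pairWV 0 V) - linObj ℓ x y u ≤
      -(1 / n * ∑ i, deriv (fun p => ℓ p (y i)) 0 * ⟪u, x i⟫) := by
  have h0 : netObj ℓ f x y (pairWV 0 V) = 1 / n * ∑ i, ℓ 0 (y i) := by
    simpa using netObj_line (ℓ := ℓ) (f := f) (x := x) (y := y) V 0 0 0
  rw [h0, linObj_eq, ← mul_sub, ← Finset.sum_sub_distrib, ← mul_neg, ← Finset.sum_neg_distrib]
  gcongr with i
  have := (hconv (y i)).deriv_mul_sub_le_sub (Set.mem_univ 0) (Set.mem_univ ⟪u, x i⟫)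
    (hdiff _ 0)
  linarith

lemma fderiv_netObj_pairWV_zero_eq (hdiff : ∀ y₀ : ℝ, Differentiable ℝ fun p => ℓ p y₀)
    (V : Matrix (Fin d) (Fin k) ℝ) (u : Vec d) :
    fderiv ℝ (netObj ℓ f x y) (pairWV 0 V) (pairWV u 0) =
      1 / n * ∑ i, deriv (fun p => ℓ p (y i)) 0 * ⟪u, x i⟫ +
        ⟪u, Matrix.toEuclideanLin V (mixedPartialVec ℓ f x y)⟫ := by
  rw [fderiv_netObj_pairWV_zero hdiff, inner_toEuclideanLin_mixedPartialVec]
  simp [inner_add_right, mul_add, Finset.sum_add_distrib]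

end Network

/-- Theorem 2 of the paper. -/
theorem at_zero_grad_hessian_lower_bound
    {d k n : ℕ} (ℓ : ℝ → ℝ → ℝ) (f : Vec d → Vec k)
    (x : Fin n → Vec d) (y : Fin n → ℝ)
    (hconv : ∀ y₀ : ℝ, ConvexOn ℝ Set.univ fun p => ℓ p y₀)
    (hdiff : ∀ y₀ : ℝ, Differentiable ℝ fun p => ℓ p y₀)
    (hdiff2 : ∀ y₀ : ℝ, Differentiable ℝ (deriv fun p => ℓ p y₀))
    (V : Matrix (Fin d) (Fin k) ℝ) (u : Vec d) (hu : u ≠ 0) :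
    ‖gradient (netObj ℓ f x y) (pairWV 0 V)‖ +
      matSpectralNorm V *
        Real.sqrt (|lambdaMin (hessianMatrix (netObj ℓ f x y) (pairWV 0 V))| *
            matSpectralNorm (hessWW ℓ f x y (pairWV 0 V)) +
          lambdaMin (hessianMatrix (netObj ℓ f x y) (pairWV 0 V)) ^ 2) ≥
      (netObj ℓ f x y (pairWV 0 V) - linObj ℓ x y u) / ‖u‖ := by
  have hu' : 0 < ‖u‖ := norm_pos_iff.mpr hu
  have hunit : ‖‖u‖⁻¹ • u‖ = 1 := by rw [norm_smul, norm_inv, norm_norm, inv_mul_cancel₀ hu'.ne']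
  have hm := Real.le_sqrt_of_sq_le
    (norm_mixedPartialVec_sq_le (f := f) (x := x) (y := y) hdiff hdiff2 V hunit)
  have hgrad := neg_fderiv_le_norm_gradient_mul (netObj ℓ f x y) (pairWV 0 V) (pairWV u 0)
  rw [norm_pairWV_zero_right, fderiv_netObj_pairWV_zero_eq hdiff] at hgrad
  rw [ge_iff_le, div_le_iff₀ hu']
  calc netObj ℓ f x y (pairWV 0 V) - linObj ℓ x y u
      ≤ -(1 / n * ∑ i, deriv (fun p => ℓ p (y i)) 0 * ⟪u, x i⟫) :=
        netObj_pairWV_zero_sub_linObj_le hconv hdiff V u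
    _ ≤ ‖gradient (netObj ℓ f x y) (pairWV 0 V)‖ * ‖u‖ +
          matSpectralNorm V * ‖mixedPartialVec ℓ f x y‖ * ‖u‖ := by
        linarith [inner_toEuclideanLin_le_matSpectralNorm V u (mixedPartialVec ℓ f x y)]
    _ ≤ _ := by
        rw [add_mul]
        gcongr
        exact norm_nonneg _
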